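/- Let a ≥ 2 and m ≥ 1 be integers and n = a + m. Then there is no n×n symmetric matrix over the field with two elements whose qpr-sequence consists of a copies of A followed by m copies of N; i.e., there is no such matrix B for which every quasi-principal minor of order k is nonzero for 1 ≤ k ≤ a and every quasi-principal minor of order k is zero for a + 1 ≤ k ≤ n. -/

import Mathlib

open Matrix

/-- The minor of a square matrix `B` lying in the rows indexed by `α` and the columns
indexed by `β` (each listed in increasing order); junk value `0` if `α.card ≠ β.card`. -/
def qMinor {R : Type*} [CommRing R] {m : Type*} [Fintype m] [LinearOrder m]
    (B : Matrix m m R) (α β : Finset m) : R :=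
  if h : β.card = α.card then
    (Matrix.of fun i j : Fin α.card =>
      B (α.orderEmbOfFin rfl i) (β.orderEmbOfFin h j)).det
  else 0

/-- `α` and `β` index a quasi-principal submatrix of order `k`, i.e.
`|α| = |β| = k` and `k - 1 ≤ |α ∩ β| (≤ k)`. -/
def IsQPPair {m : Type*} [DecidableEq m] (k : ℕ) (α β : Finset m) : Prop :=
  α.card = k ∧ β.card = k ∧ k - 1 ≤ (α ∩ β).card

/-- All quasi-principal minors of `B` of order `k` are nonzero. -/
def QPAllNonzero {R : Type*} [CommRing R] {m : Type*} [Fintype m] [LinearOrder m]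
    (B : Matrix m m R) (k : ℕ) : Prop :=
  ∀ α β : Finset m, IsQPPair k α β → qMinor B α β ≠ 0

/-- All quasi-principal minors of `B` of order `k` are zero. -/
def QPAllZero {R : Type*} [CommRing R] {m : Type*} [Fintype m] [LinearOrder m]
    (B : Matrix m m R) (k : ℕ) : Prop :=
  ∀ α β : Finset m, IsQPPair k α β → qMinor B α β = 0

/-- The three possible letters of a qpr-sequence. -/
inductive QPR : Type
  | A
  | S
  | N
deriving DecidableEq

open Classical in
/-- The letter of the qpr-sequence of `B` corresponding to order `k`:
`A` if all quasi-principal minors of order `k` are nonzero, `N` if all are zero,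
and `S` otherwise. -/
noncomputable def qprEntry {R : Type*} [CommRing R] {m : Type*} [Fintype m] [LinearOrder m]
    (B : Matrix m m R) (k : ℕ) : QPR :=
  if QPAllNonzero B k then QPR.A
  else if QPAllZero B k then QPR.N
  else QPR.S

/-- A sequence of letters `q 0, …, q (n-1)` (standing for `q_1 ⋯ q_n`) is attainable
over `F` if it is the qpr-sequence of an `n × n` symmetric matrix over `F`. -/
def Attainable (F : Type*) [Field F] {n : ℕ} (q : Fin n → QPR) : Prop :=
  ∃ B : Matrix (Fin n) (Fin n) F, B.IsSymm ∧ ∀ k : Fin n, qprEntry B ((k : ℕ) + 1) = q k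

/-- The Schur complement `B/B[γ] = B[γᶜ] - B[γᶜ, γ] B[γ]⁻¹ B[γ, γᶜ]`,
with rows and columns indexed by `γᶜ` (indexing inherited from `B`). -/
noncomputable def schurCompl {R : Type*} [CommRing R] {n : ℕ}
    (B : Matrix (Fin n) (Fin n) R) (γ : Finset (Fin n)) :
    Matrix ↥(γᶜ) ↥(γᶜ) R :=
  B.submatrix (fun i : ↥(γᶜ) => (i : Fin n)) (fun j : ↥(γᶜ) => (j : Fin n)) -
    B.submatrix (fun i : ↥(γᶜ) => (i : Fin n)) (fun j : ↥γ => (j : Fin n)) *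
      (B.submatrix (fun i : ↥γ => (i : Fin n)) fun j : ↥γ => (j : Fin n))⁻¹ *
      B.submatrix (fun i : ↥γ => (i : Fin n)) fun j : ↥(γᶜ) => (j : Fin n)

/-- The `(m+1) × (m+1)` matrix with block form `[[A, x], [yᵀ, b]]`. -/
def borderMat {R : Type*} [CommRing R] {m : ℕ} (A : Matrix (Fin m) (Fin m) R)
    (x y : Fin m → R) (b : R) : Matrix (Fin (m + 1)) (Fin (m + 1)) R :=
  Matrix.of fun i j =>
    if hi : (i : ℕ) < m then
      if hj : (j : ℕ) < m then A ⟨i, hi⟩ ⟨j, hj⟩ else x ⟨i, hi⟩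
    else
      if hj : (j : ℕ) < m then y ⟨j, hj⟩ else b

/- Over `𝔽₂` a nonzero scalar is `1`, so if every `1 × 1` minor is nonzero then `B` is the
all-ones matrix; its principal `2 × 2` minors then vanish, contradicting `q₂ = A`. -/

theorem qMinor_singleton {R : Type*} [CommRing R] {m : Type*} [Fintype m] [LinearOrder m]
    (B : Matrix m m R) (i j : m) : qMinor B {i} {j} = B i j := by
  have : Unique (Fin ({i} : Finset m).card) := by rw [Finset.card_singleton]; infer_instance
  rw [qMinor, dif_pos (by simp), det_unique, of_apply]
  congr <;> exact Finset.mem_singleton.mp (Finset.orderEmbOfFin_mem _ _ _)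

theorem qMinor_eq_zero_of_forall_eq {R : Type*} [CommRing R] {m : Type*} [Fintype m]
    [LinearOrder m] {B : Matrix m m R} {c : R} (hB : ∀ i j, B i j = c) {α β : Finset m}
    (hα : 2 ≤ α.card) : qMinor B α β = 0 := by
  unfold qMinor
  split_ifs
  · refine det_zero_of_row_eq (i := ⟨0, by omega⟩) (j := ⟨1, by omega⟩) (by simp) ?_
    ext j
    simp [hB]
  · rfl

theorem stmt_19_general {a m : ℕ} (ha : 2 ≤ a) :
    ¬ ∃ B : Matrix (Fin (a + m)) (Fin (a + m)) (ZMod 2), B.IsSymm ∧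
      (∀ k : ℕ, 1 ≤ k → k ≤ a → QPAllNonzero B k) ∧
      (∀ k : ℕ, a + 1 ≤ k → k ≤ a + m → QPAllZero B k) := by
  rintro ⟨B, -, hA, -⟩
  have hB : ∀ i j, B i j = 1 := fun i j =>
    Fin.eq_one_of_ne_zero _ <| qMinor_singleton B i j ▸
      hA 1 le_rfl (by omega) {i} {j} ⟨Finset.card_singleton i, Finset.card_singleton j, by simp⟩
  obtain ⟨α, -, hα⟩ := Finset.exists_subset_card_eq (s := Finset.univ)
    (show 2 ≤ (Finset.univ : Finset (Fin (a + m))).card by simp; omega)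
  exact hA 2 (by omega) ha α α ⟨hα, hα, by simp [hα]⟩ (qMinor_eq_zero_of_forall_eq hB hα.ge)

/-- for `a ≥ 2`, `m ≥ 1` and `n = a + m`, there is no `n × n` symmetric
matrix over the field with two elements whose qpr-sequence is `A ⋯ A N ⋯ N` with `a`
copies of `A` followed by `m` copies of `N`. -/
theorem stmt_19 {a m : ℕ} (ha : 2 ≤ a) (hm : 1 ≤ m) :
    ¬ ∃ B : Matrix (Fin (a + m)) (Fin (a + m)) (ZMod 2), B.IsSymm ∧
      (∀ k : ℕ, 1 ≤ k → k ≤ a → QPAllNonzero B k) ∧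
      (∀ k : ℕ, a + 1 ≤ k → k ≤ a + m → QPAllZero B k) :=
  stmt_19_general ha
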